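/- arXiv:1107.2365 — 5 statements merged into one kernel-verified Lean document; each statement's English description precedes it below -/
import Mathlib

section
/- For all β in (0,1), g⁻¹(H_b(β)) < β, where g⁻¹ is the inverse of g(x) = (x+1)log(x+1) − x log x on [0,∞) and H_b is binary entropy. -/
/-! Writing `φ x = x log x`, one has `g β - Hb β = φ (1 + β) + φ (1 - β)`, which is positive for
`β ≠ 0` by strict convexity of `φ` (as `φ 1 = 0`). Hence `g (g⁻¹ (Hb β)) = Hb β < g β`, and since `g`
is strictly increasing on `[0, ∞)` (its derivative is `log (x + 1) - log x > 0`), `g⁻¹ (Hb β) < β`. -/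

noncomputable def g (x : ℝ) : ℝ := (x + 1) * Real.log (x + 1) - x * Real.log x

noncomputable def Hb (p : ℝ) : ℝ := -(p * Real.log p) - (1 - p) * Real.log (1 - p)

open Real

lemma Hb_eq_binEntropy : Hb = binEntropy := by
  ext p
  simp only [Hb, binEntropy, log_inv]
  ring

lemma continuous_g : Continuous g :=
  (continuous_mul_log.comp (continuous_id.add continuous_const)).sub continuous_mul_log

lemma hasDerivAt_g {x : ℝ} (hx : 0 < x) : HasDerivAt g (log (x + 1) - log x) x := by
  have h₁ : HasDerivAt (fun t ↦ (t + 1) * log (t + 1)) ((log (x + 1) + 1) * 1) x :=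
    (hasDerivAt_mul_log (by linarith)).comp x ((hasDerivAt_id x).add_const 1)
  exact (h₁.sub (hasDerivAt_mul_log hx.ne')).congr_deriv (by ring)

lemma strictMonoOn_g : StrictMonoOn g (Set.Ici 0) := by
  refine strictMonoOn_of_deriv_pos (convex_Ici 0) continuous_g.continuousOn fun x hx ↦ ?_
  rw [interior_Ici] at hx
  rw [(hasDerivAt_g hx).deriv, sub_pos]
  exact log_lt_log hx (lt_add_one x)

lemma mul_log_one_add_add_mul_log_one_sub_pos {β : ℝ} (hβ₀ : β ≠ 0) (hβ : |β| ≤ 1) :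
    0 < (1 + β) * log (1 + β) + (1 - β) * log (1 - β) := by
  obtain ⟨hβl, hβu⟩ := abs_le.mp hβ
  have hconv := strictConvexOn_mul_log.2 (x := 1 + β) (y := 1 - β)
    (Set.mem_Ici.mpr (by linarith)) (Set.mem_Ici.mpr (by linarith))
    (by contrapose! hβ₀; linarith) one_half_pos one_half_pos (add_halves 1)
  simp only [smul_eq_mul] at hconv
  rw [show 1 / 2 * (1 + β) + 1 / 2 * (1 - β) = 1 by ring, log_one, mul_zero] at hconv
  linarith

theorem ginv_binEntropy_lt (ginv : ℝ → ℝ)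
    (hinv : ∀ x ∈ Set.Ici (0:ℝ), 0 ≤ ginv x ∧ g (ginv x) = x) :
    ∀ β ∈ Set.Ioo (0:ℝ) 1, ginv (Hb β) < β := by
  rintro β ⟨hβ₀, hβ₁⟩
  have hHb : 0 ≤ Hb β := Hb_eq_binEntropy ▸ binEntropy_nonneg hβ₀.le hβ₁.le
  obtain ⟨hginv₀, hg_ginv⟩ := hinv (Hb β) hHb
  refine (strictMonoOn_g.lt_iff_lt hginv₀ hβ₀.le).mp ?_
  have hgap := mul_log_one_add_add_mul_log_one_sub_pos hβ₀.ne'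
    (abs_le.mpr ⟨by linarith, hβ₁.le⟩)
  rw [hg_ginv, g, Hb, add_comm β 1]
  linarith
end

section
/- If z = Bin(P, η) is the binomial distribution with parameters P and η ∈ (0,1), then the Shannon entropy H(Bin(P,η)) is nondecreasing in P. -/
open Real Finset

private lemma binom_key (η : ℝ) (P j : ℕ) :
    (Nat.choose (P+1) (j+1) : ℝ) * η^(j+1) * (1-η)^(P+1-(j+1)) =
    (1-η) * ((Nat.choose P (j+1) : ℝ) * η^(j+1) * (1-η)^(P-(j+1))) +
      η * ((Nat.choose P j : ℝ) * η^j * (1-η)^(P-j)) := by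
  rw [show P+1-(j+1) = P-j from by omega, Nat.choose_succ_succ]
  by_cases h : j < P
  · rw [show P - j = (P-(j+1))+1 from by omega]
    push_cast; ring
  · rw [Nat.choose_eq_zero_of_lt (by omega : P < j+1)]
    push_cast; ring

private lemma concave_step (η : ℝ) (hη : η ∈ Set.Ioo (0:ℝ) 1) {a b : ℝ}
    (ha : 0 ≤ a) (hb : 0 ≤ b) :
    (1-η) * Real.negMulLog a + η * Real.negMulLog b ≤
      Real.negMulLog ((1-η) * a + η * b) := by
  have := Real.concaveOn_negMulLog.2 (Set.mem_Ici.2 ha) (Set.mem_Ici.2 hb)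
    (by linarith [hη.2] : (0:ℝ) ≤ 1-η) (le_of_lt hη.1) (by ring)
  simpa [smul_eq_mul] using this

/-- The Shannon entropy of the binomial distribution `Bin(P, η)` is
nondecreasing in `P`, for fixed `η ∈ (0,1)`. -/
theorem binomial_entropy_monotone (η : ℝ) (hη : η ∈ Set.Ioo (0:ℝ) 1) :
    Monotone (fun P : ℕ =>
      -∑ k ∈ Finset.range (P + 1),
        ((Nat.choose P k : ℝ) * η ^ k * (1 - η) ^ (P - k)) *
          Real.log ((Nat.choose P k : ℝ) * η ^ k * (1 - η) ^ (P - k))) := by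
  have hη0 : (0:ℝ) ≤ η := le_of_lt hη.1
  have hη1 : (0:ℝ) ≤ 1 - η := by linarith [hη.2]
  apply monotone_nat_of_le_succ
  intro P
  set p : ℕ → ℝ := fun k => (Nat.choose P k : ℝ) * η ^ k * (1 - η) ^ (P - k) with hp
  set q : ℕ → ℝ := fun k => (Nat.choose (P+1) k : ℝ) * η ^ k * (1 - η) ^ (P+1 - k) with hq
  have hpnn : ∀ k, 0 ≤ p k := fun k => by positivity
  have hptop : p (P+1) = 0 := by
    simp [hp, Nat.choose_eq_zero_of_lt (Nat.lt_succ_self P)]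
  have hsum : ∀ (n : ℕ) (f : ℕ → ℝ),
      -∑ k ∈ range (n+1), f k * Real.log (f k)
        = ∑ k ∈ range (n+1), Real.negMulLog (f k) := by
    intro n f
    rw [← Finset.sum_neg_distrib]
    exact Finset.sum_congr rfl fun k _ => by rw [Real.negMulLog_eq_neg]
  show -∑ k ∈ range (P+1), p k * Real.log (p k)
      ≤ -∑ k ∈ range (P+1+1), q k * Real.log (q k)
  rw [hsum P p, hsum (P+1) q]
  have hq0 : q 0 = (1-η) * p 0 + η * 0 := by simp [hq, hp]; ring
  have hqs : ∀ j, q (j+1) = (1-η) * p (j+1) + η * p j := fun j => binom_key η P j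
  calc ∑ k ∈ range (P+1), Real.negMulLog (p k)
      = (1-η) * ∑ k ∈ range (P+2), Real.negMulLog (p k)
          + η * ∑ k ∈ range (P+1), Real.negMulLog (p k) := by
        rw [Finset.sum_range_succ (fun k => Real.negMulLog (p k)) (P+1), hptop, Real.negMulLog_zero]; ring
    _ = ((1-η) * Real.negMulLog (p 0) + η * Real.negMulLog 0)
          + ∑ j ∈ range (P+1),
            ((1-η) * Real.negMulLog (p (j+1)) + η * Real.negMulLog (p j)) := by
        rw [Finset.sum_range_succ' (fun k => Real.negMulLog (p k)) (P+1)]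
        rw [Real.negMulLog_zero, Finset.sum_add_distrib, ← Finset.mul_sum, ← Finset.mul_sum]
        ring
    _ ≤ Real.negMulLog (q 0)
          + ∑ j ∈ range (P+1), Real.negMulLog (q (j+1)) := by
        gcongr with j hj
        · rw [hq0]; exact concave_step η hη (hpnn 0) le_rfl
        · rw [hqs j]; exact concave_step η hη (hpnn (j+1)) (hpnn j)
    _ = ∑ k ∈ range (P+1+1), Real.negMulLog (q k) := by
        rw [Finset.sum_range_succ' (fun k => Real.negMulLog (q k)) (P+1)]; ring
end

section
/- For any probability distribution z = (z_0, ..., z_L) on {0,...,L} with all z_i > 0, define Θ(z) = −∑_{i=1}^{L} i z_i log(z_i / z_{i−1}). Then Θ(z) ≤ H(z), where H is Shannon entropy. -/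
/-!
Counting `i = #{j : 1 ≤ j ≤ i}` gives `Θ(z) = ∑_{j=1}^L ∑_{i=j}^L z_i log (z_{i-1} / z_i)`.
With the tail masses `S_j = ∑_{i=j}^L z_i`, the log-sum inequality bounds the inner sum by
`S_j log (S_{j-1} / S_j)`, because `∑_{i=j}^L z_{i-1} ≤ S_{j-1}`. Since `z_j ≤ S_j = z_j + S_{j+1}`,
`S_j log (S_{j-1} / S_j) ≤ -z_j log z_j + (S_j log S_{j-1} - S_{j+1} log S_j)`, and the bracket
telescopes to `S_1 log S_0 - S_{L+1} log S_L = 0` as `S_0 = 1`.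
-/

open Finset Real

theorem Real.sum_mul_log_div_le_mul_log_div_sum {ι : Type*} (s : Finset ι) {a b : ι → ℝ}
    (ha : ∀ i ∈ s, 0 < a i) (hb : ∀ i ∈ s, 0 < b i) :
    ∑ i ∈ s, a i * log (b i / a i) ≤ (∑ i ∈ s, a i) * log ((∑ i ∈ s, b i) / ∑ i ∈ s, a i) := by
  rcases s.eq_empty_or_nonempty with rfl | hs
  · simp
  set A := ∑ i ∈ s, a i
  set B := ∑ i ∈ s, b i
  have hA : 0 < A := sum_pos ha hs
  have hB : 0 < B := sum_pos hb hs
  -- `log x ≤ x - 1` at `x = (b i / a i) / (B / A)`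
  have key : ∀ i ∈ s, a i * log (b i / a i) ≤ A / B * b i - a i + a i * log (B / A) := by
    intro i hi
    have hai := ha i hi
    have hbi := hb i hi
    have hlog := log_le_sub_one_of_pos (show 0 < b i / a i / (B / A) by positivity)
    rw [log_div (by positivity) (by positivity)] at hlog
    have hmul := mul_le_mul_of_nonneg_left hlog hai.le
    have hrhs : a i * (b i / a i / (B / A) - 1) = A / B * b i - a i := by field_simp
    linarith
  calc ∑ i ∈ s, a i * log (b i / a i)
      ≤ ∑ i ∈ s, (A / B * b i - a i + a i * log (B / A)) := sum_le_sum key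
    _ = A * log (B / A) := by
      rw [sum_add_distrib, sum_sub_distrib, ← mul_sum, ← sum_mul]
      field_simp
      ring

theorem Finset.sum_Icc_natCast_mul_eq_sum_sum_Icc {R : Type*} [NonAssocSemiring R] (L : ℕ)
    (f : ℕ → R) : ∑ i ∈ Icc 1 L, (i : R) * f i = ∑ j ∈ Icc 1 L, ∑ i ∈ Icc j L, f i := by
  rw [sum_comm' (t' := Icc 1 L) (s' := fun i => Icc 1 i) (by intro j i; simp only [mem_Icc]; omega)]
  simp [nsmul_eq_mul]

def tailSum (z : ℕ → ℝ) (L j : ℕ) : ℝ := ∑ i ∈ Icc j L, z i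

section tailSum

variable {z : ℕ → ℝ} {L j : ℕ}

theorem tailSum_zero : tailSum z L 0 = ∑ i ∈ range (L + 1), z i := by
  rw [tailSum, Nat.range_succ_eq_Icc_zero]

theorem tailSum_of_lt (h : L < j) : tailSum z L j = 0 := by
  simp [tailSum, Icc_eq_empty_of_lt h]

theorem tailSum_eq_add_tailSum_succ (hj : j ≤ L) : tailSum z L j = z j + tailSum z L (j + 1) := by
  rw [tailSum, ← add_sum_Ioc_eq_sum_Icc hj, tailSum, Icc_add_one_left_eq_Ioc]

theorem le_tailSum (hz : ∀ i ≤ L, 0 ≤ z i) (hj : j ≤ L) : z j ≤ tailSum z L j :=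
  single_le_sum (fun i hi => hz i (mem_Icc.1 hi).2) (mem_Icc.2 ⟨le_rfl, hj⟩)

theorem tailSum_pos (hz : ∀ i ≤ L, 0 < z i) (hj : j ≤ L) : 0 < tailSum z L j :=
  sum_pos (fun i hi => hz i (mem_Icc.1 hi).2) ⟨j, mem_Icc.2 ⟨le_rfl, hj⟩⟩

theorem sum_Icc_mul_log_div_le_tailSum (hz : ∀ i ≤ L, 0 < z i) (hj : 1 ≤ j) (hjL : j ≤ L) :
    ∑ i ∈ Icc j L, z i * log (z (i - 1) / z i) ≤
      tailSum z L j * log (tailSum z L (j - 1) / tailSum z L j) := by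
  have hshift_pos : ∀ i ∈ Icc j L, 0 < z (i - 1) := fun i hi =>
    hz (i - 1) (by simp only [mem_Icc] at hi; omega)
  have hshift : ∑ i ∈ Icc j L, z (i - 1) ≤ tailSum z L (j - 1) :=
    calc ∑ i ∈ Icc j L, z (i - 1) = ∑ i ∈ (Icc j L).image (· - 1), z i :=
          (sum_image fun a ha b hb hab => by
            simp only [coe_Icc, Set.mem_Icc] at ha hb hab; omega).symm
      _ ≤ tailSum z L (j - 1) :=
          sum_le_sum_of_subset_of_nonneg (by intro i; simp only [mem_image, mem_Icc]; omega)
            fun i hi _ => (hz i (mem_Icc.1 hi).2).le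
  have hS := tailSum_pos hz hjL
  have hshift_sum_pos : 0 < ∑ i ∈ Icc j L, z (i - 1) := sum_pos hshift_pos ⟨j, by simp [hjL]⟩
  calc ∑ i ∈ Icc j L, z i * log (z (i - 1) / z i)
      ≤ tailSum z L j * log ((∑ i ∈ Icc j L, z (i - 1)) / tailSum z L j) :=
        sum_mul_log_div_le_mul_log_div_sum _ (fun i hi => hz i (mem_Icc.1 hi).2) hshift_pos
    _ ≤ tailSum z L j * log (tailSum z L (j - 1) / tailSum z L j) := by gcongr

theorem tailSum_mul_log_div_le (hz : ∀ i ≤ L, 0 < z i) (hj : 1 ≤ j) (hjL : j ≤ L) :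
    tailSum z L j * log (tailSum z L (j - 1) / tailSum z L j) ≤ -(z j * log (z j)) -
      (tailSum z L (j + 1) * log (tailSum z L j) - tailSum z L j * log (tailSum z L (j - 1))) := by
  have hzj := hz j hjL
  have hlog : z j * log (z j) ≤ z j * log (tailSum z L j) := by
    gcongr
    exact le_tailSum (fun i hi => (hz i hi).le) hjL
  have hsplit : tailSum z L j * log (tailSum z L j) =
      z j * log (tailSum z L j) + tailSum z L (j + 1) * log (tailSum z L j) := by
    rw [← add_mul, ← tailSum_eq_add_tailSum_succ hjL]
  rw [log_div (tailSum_pos hz (by omega)).ne' (tailSum_pos hz hjL).ne']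
  linarith

end tailSum

/-- For a strictly positive probability vector `z_0, ..., z_L`,
`Θ(z) = -∑_{i=1}^L i z_i log(z_i / z_{i-1}) ≤ H(z)`. -/
theorem theta_le_entropy (L : ℕ) (z : ℕ → ℝ)
    (hz : ∀ i ≤ L, 0 < z i) (hzsum : ∑ i ∈ Finset.range (L + 1), z i = 1) :
    -∑ i ∈ Finset.Icc 1 L, (i : ℝ) * z i * Real.log (z i / z (i - 1)) ≤
      -∑ i ∈ Finset.range (L + 1), z i * Real.log (z i) := by
  have hS0 : tailSum z L 0 = 1 := tailSum_zero.trans hzsum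
  have htelescope : ∑ j ∈ Icc 1 L, (tailSum z L (j + 1) * log (tailSum z L j) -
      tailSum z L j * log (tailSum z L (j - 1))) = 0 := by
    rw [← Ico_add_one_right_eq_Icc]
    exact (sum_Ico_sub (fun j => tailSum z L j * log (tailSum z L (j - 1))) (by omega)).trans
      (by simp [tailSum_of_lt L.lt_add_one, hS0])
  have hz0 : z 0 * log (z 0) ≤ 0 :=
    mul_log_nonpos (hz 0 L.zero_le).le (hS0 ▸ le_tailSum (fun i hi => (hz i hi).le) L.zero_le)
  calc -∑ i ∈ Icc 1 L, (i : ℝ) * z i * log (z i / z (i - 1))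
      = ∑ j ∈ Icc 1 L, ∑ i ∈ Icc j L, z i * log (z (i - 1) / z i) := by
        rw [← sum_Icc_natCast_mul_eq_sum_sum_Icc, ← sum_neg_distrib]
        refine sum_congr rfl fun i _ => ?_
        rw [← inv_div, log_inv]
        ring
    _ ≤ ∑ j ∈ Icc 1 L, tailSum z L j * log (tailSum z L (j - 1) / tailSum z L j) :=
        sum_le_sum fun j hj => sum_Icc_mul_log_div_le_tailSum hz (mem_Icc.1 hj).1 (mem_Icc.1 hj).2
    _ ≤ ∑ j ∈ Icc 1 L, (-(z j * log (z j)) -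
          (tailSum z L (j + 1) * log (tailSum z L j) - tailSum z L j * log (tailSum z L (j - 1)))) :=
        sum_le_sum fun j hj => tailSum_mul_log_div_le hz (mem_Icc.1 hj).1 (mem_Icc.1 hj).2
    _ = -∑ j ∈ Icc 1 L, z j * log (z j) := by
        rw [sum_sub_distrib, htelescope, sub_zero, sum_neg_distrib]
    _ ≤ -∑ i ∈ range (L + 1), z i * log (z i) := by
        rw [Nat.range_succ_eq_Icc_zero, ← add_sum_Ioc_eq_sum_Icc L.zero_le,
          ← Icc_add_one_left_eq_Ioc, zero_add]
        linarith
end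

section
/- For any probability distribution z = (z_0, z_1, ...) on ℕ with strictly positive entries, ∑_{i=1}^∞ i z_i log(z_i / z_{i−1}) > −1 (assuming the sum converges); equivalently, −∑_{i=1}^∞ i z_i log(z_i/z_{i−1}) < 1. -/
/-- For a strictly positive probability distribution on ℕ (with the series
convergent), `∑_{i≥1} i z_i log(z_i/z_{i-1}) > -1`; here the sum over `i ≥ 1`
is written with `i = k+1`. -/
theorem theta_lt_one (z : ℕ → ℝ) (hz : ∀ i, 0 < z i) (hzsum : HasSum z 1)
    (hs : Summable fun k : ℕ => ((k + 1 : ℕ) : ℝ) * z (k + 1) * Real.log (z (k + 1) / z k)) :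
    -1 < ∑' k : ℕ, ((k + 1 : ℕ) : ℝ) * z (k + 1) * Real.log (z (k + 1) / z k) := by
  set f : ℕ → ℝ := fun k : ℕ => ((k + 1 : ℕ) : ℝ) * z (k + 1) * Real.log (z (k + 1) / z k)
    with hf
  set g : ℕ → ℝ := fun k : ℕ => ((k + 1 : ℕ) : ℝ) * (z (k + 1) - z k) with hg
  -- termwise inequality g ≤ f
  have key : ∀ k, g k ≤ f k := by
    intro k
    have hlog : Real.log (z k / z (k + 1)) ≤ z k / z (k + 1) - 1 :=
      Real.log_le_sub_one_of_pos (div_pos (hz k) (hz (k + 1)))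
    have hlog' : 1 - z k / z (k + 1) ≤ Real.log (z (k + 1) / z k) := by
      rw [Real.log_div (ne_of_gt (hz (k + 1))) (ne_of_gt (hz k))]
      rw [Real.log_div (ne_of_gt (hz k)) (ne_of_gt (hz (k + 1)))] at hlog
      linarith
    have hpos : (0 : ℝ) < ((k + 1 : ℕ) : ℝ) * z (k + 1) :=
      mul_pos (by positivity) (hz (k + 1))
    have := mul_le_mul_of_nonneg_left hlog' hpos.le
    have heq : ((k + 1 : ℕ) : ℝ) * z (k + 1) * (1 - z k / z (k + 1)) = g k := by
      have h1 : z (k + 1) * (1 - z k / z (k + 1)) = z (k + 1) - z k := by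
        field_simp [(hz _).ne']
      rw [mul_assoc, h1]
    calc g k = ((k + 1 : ℕ) : ℝ) * z (k + 1) * (1 - z k / z (k + 1)) := heq.symm
      _ ≤ f k := this
  -- partial sums of g
  have gsum : ∀ n, ∑ k ∈ Finset.range n, g k = n * z n - ∑ k ∈ Finset.range n, z k := by
    intro n
    induction n with
    | zero => simp
    | succ n ih =>
      rw [Finset.sum_range_succ, Finset.sum_range_succ, ih]
      push_cast [hg]
      ring
  -- partial sums of z are at most 1
  have zsum_le : ∀ n, ∑ k ∈ Finset.range n, z k ≤ 1 :=
    fun n => sum_le_hasSum (Finset.range n) (fun i _ => (hz i).le) hzsum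
  have glb : ∀ n, (-1 : ℝ) ≤ ∑ k ∈ Finset.range n, g k := by
    intro n
    rw [gsum n]
    have : (0:ℝ) ≤ (n : ℝ) * z n := mul_nonneg (Nat.cast_nonneg n) (hz n).le
    linarith [zsum_le n]
  -- z is not constant
  have hne : ∃ k, z (k + 1) ≠ z k := by
    by_contra h
    push_neg at h
    have hconst : ∀ k, z k = z 0 := by
      intro k
      induction k with
      | zero => rfl
      | succ k ih => rw [h k, ih]
    have htend : Filter.Tendsto z Filter.atTop (nhds 0) :=
      hzsum.summable.tendsto_atTop_zero
    have : Filter.Tendsto z Filter.atTop (nhds (z 0)) := by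
      have : z = fun _ => z 0 := funext hconst
      rw [this]
      exact tendsto_const_nhds
    exact absurd (tendsto_nhds_unique this htend) (ne_of_gt (hz 0))
  obtain ⟨k0, hk0⟩ := hne
  -- strict inequality at k0
  have strict : g k0 < f k0 := by
    have hratio : z k0 / z (k0 + 1) ≠ 1 := by
      intro h
      exact hk0 ((div_eq_one_iff_eq (hz (k0 + 1)).ne').mp h).symm
    have hlog : Real.log (z k0 / z (k0 + 1)) < z k0 / z (k0 + 1) - 1 :=
      Real.log_lt_sub_one_of_pos (div_pos (hz k0) (hz (k0 + 1))) hratio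
    have hlog' : 1 - z k0 / z (k0 + 1) < Real.log (z (k0 + 1) / z k0) := by
      rw [Real.log_div (ne_of_gt (hz (k0 + 1))) (ne_of_gt (hz k0))]
      rw [Real.log_div (ne_of_gt (hz k0)) (ne_of_gt (hz (k0 + 1)))] at hlog
      linarith
    have hpos : (0 : ℝ) < ((k0 + 1 : ℕ) : ℝ) * z (k0 + 1) :=
      mul_pos (by positivity) (hz (k0 + 1))
    have := mul_lt_mul_of_pos_left hlog' hpos
    have heq : ((k0 + 1 : ℕ) : ℝ) * z (k0 + 1) * (1 - z k0 / z (k0 + 1)) = g k0 := by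
      have h1 : z (k0 + 1) * (1 - z k0 / z (k0 + 1)) = z (k0 + 1) - z k0 := by
        field_simp [(hz _).ne']
      rw [mul_assoc, h1]
    calc g k0 = ((k0 + 1 : ℕ) : ℝ) * z (k0 + 1) * (1 - z k0 / z (k0 + 1)) := heq.symm
      _ < f k0 := this
  set δ := f k0 - g k0 with hδ
  have hδpos : 0 < δ := sub_pos.mpr strict
  -- partial sums of f are ≥ -1 + δ eventually
  have flb : ∀ n, k0 < n → (-1 : ℝ) + δ ≤ ∑ k ∈ Finset.range n, f k := by
    intro n hn
    have hsplit : ∑ k ∈ Finset.range n, f k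
        = ∑ k ∈ Finset.range n, g k + ∑ k ∈ Finset.range n, (f k - g k) := by
      rw [← Finset.sum_add_distrib]
      apply Finset.sum_congr rfl
      intros; ring
    have hsingle : δ ≤ ∑ k ∈ Finset.range n, (f k - g k) := by
      apply Finset.single_le_sum (f := fun k => f k - g k)
      · intro i _; linarith [key i]
      · exact Finset.mem_range.mpr hn
    rw [hsplit]
    linarith [glb n]
  have htendsto : Filter.Tendsto (fun n => ∑ k ∈ Finset.range n, f k) Filter.atTop
      (nhds (∑' k, f k)) := hs.hasSum.tendsto_sum_nat
  have : (-1 : ℝ) + δ ≤ ∑' k, f k := by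
    apply ge_of_tendsto htendsto
    filter_upwards [Filter.eventually_gt_atTop k0] with n hn
    exact flb n hn
  linarith
end

section
/- For a probability vector z^(L) defined recursively by z^(0) = [1] and z^(L) = ((1−z_L) z^(L−1), z_L), the quantity Ξ(z^(L)) = Θ(z^(L)) − H(z^(L)) satisfies Ξ(z^(L)) ≤ L log(1 − z_L), where Θ(z) = −∑_i i z_i log(z_i/z_{i−1}) and H is Shannon entropy. -/
/-- For the recursively built distributions `z^(0) = [1]`,
`z^(L) = ((1 - a_L) z^(L-1), a_L)` (with masses `a_L ∈ (0,1)`), the quantity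
`Ξ(z^(L)) = Θ(z^(L)) - H(z^(L))` satisfies `Ξ(z^(L)) ≤ L log(1 - a_L)`, where
`Θ(z) = -∑_{i=1}^L i z_i log(z_i/z_{i-1})` and `H` is Shannon entropy. -/
theorem xi_le (a : ℕ → ℝ) (ha : ∀ i, 1 ≤ i → a i ∈ Set.Ioo (0:ℝ) 1)
    (v : ℕ → ℕ → ℝ)
    (hv0 : ∀ i, v 0 i = if i = 0 then 1 else 0)
    (hrec : ∀ L i, v (L + 1) i = if i = L + 1 then a (L + 1) else (1 - a (L + 1)) * v L i) :
    ∀ L : ℕ, 1 ≤ L →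
      (-∑ i ∈ Finset.Icc 1 L, (i : ℝ) * v L i * Real.log (v L i / v L (i - 1)))
        - (-∑ i ∈ Finset.range (L + 1), v L i * Real.log (v L i))
      ≤ (L : ℝ) * Real.log (1 - a L) := by
  have hpos : ∀ L i, i ≤ L → 0 < v L i := by
    intro L
    induction L with
    | zero => intro i hi; interval_cases i; simp [hv0]
    | succ n ih =>
      intro i hi
      rcases eq_or_lt_of_le hi with h | h
      · rw [hrec, if_pos h]; exact (ha (n+1) (by omega)).1
      · rw [hrec, if_neg (by omega)]
        have h2 := (ha (n+1) (by omega)).2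
        exact mul_pos (by linarith) (ih i (by omega))
  have hsum : ∀ L, ∑ i ∈ Finset.range (L+1), v L i = 1 := by
    intro L
    induction L with
    | zero => simp [hv0]
    | succ n ih =>
      rw [Finset.sum_range_succ, hrec, if_pos rfl]
      have : ∑ i ∈ Finset.range (n+1), v (n+1) i
          = (1 - a (n+1)) * ∑ i ∈ Finset.range (n+1), v n i := by
        rw [Finset.mul_sum]
        refine Finset.sum_congr rfl fun i hi => ?_
        rw [hrec, if_neg (by simp at hi; omega)]
      rw [this, ih]; ring
  intro L hL
  induction L, hL using Nat.le_induction with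
  | base =>
    have h1 := ha 1 le_rfl
    have e1 : v 1 1 = a 1 := by rw [hrec]; simp
    have e0 : v 1 0 = 1 - a 1 := by rw [hrec, if_neg (by omega), hv0]; simp
    have hlog : Real.log (v 1 1 / v 1 0) = Real.log (a 1) - Real.log (1 - a 1) := by
      rw [e1, e0, Real.log_div (ne_of_gt h1.1) (by linarith [h1.2])]
    simp only [Finset.Icc_self, Finset.sum_singleton, Finset.sum_range_succ,
      Finset.sum_range_zero, Nat.cast_one, hlog]
    rw [e1, e0]
    apply le_of_eq; ring
  | succ L hL ih =>
    have hp1 := ha (L+1) (by omega)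
    have hq1 := ha L hL
    set p := a (L+1) with hp
    set q := a L with hq
    have hp0 : (0:ℝ) < 1 - p := by linarith [hp1.2]
    have vtop : v L L = q := by
      obtain ⟨m, rfl⟩ : ∃ m, L = m + 1 := ⟨L - 1, by omega⟩
      rw [hrec, if_pos rfl]
    have etop : v (L+1) (L+1) = p := by rw [hrec, if_pos rfl]
    have etop' : v (L+1) L = (1 - p) * q := by
      rw [hrec, if_neg (by omega), vtop]
    have hq0 : (0:ℝ) < q := hq1.1
    have hΘ : ∑ i ∈ Finset.Icc 1 (L+1), (i:ℝ) * v (L+1) i * Real.log (v (L+1) i / v (L+1) (i-1))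
        = (1-p) * (∑ i ∈ Finset.Icc 1 L, (i:ℝ) * v L i * Real.log (v L i / v L (i-1)))
          + ((L:ℝ)+1) * p * (Real.log p - (Real.log (1-p) + Real.log q)) := by
      rw [Finset.sum_Icc_succ_top (by omega), show L + 1 - 1 = L from rfl, etop, etop',
        Real.log_div (ne_of_gt hp1.1) (ne_of_gt (mul_pos hp0 hq0)),
        Real.log_mul (ne_of_gt hp0) (ne_of_gt hq0)]
      have hmain : ∑ i ∈ Finset.Icc 1 L, (i:ℝ) * v (L+1) i * Real.log (v (L+1) i / v (L+1) (i-1))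
          = (1-p) * (∑ i ∈ Finset.Icc 1 L, (i:ℝ) * v L i * Real.log (v L i / v L (i-1))) := by
        rw [Finset.mul_sum]
        refine Finset.sum_congr rfl fun i hi => ?_
        have hiL : 1 ≤ i ∧ i ≤ L := by simpa using hi
        rw [hrec L i, if_neg (by omega), hrec L (i-1), if_neg (by omega),
          mul_div_mul_left _ _ (ne_of_gt hp0)]
        ring
      rw [hmain]
      push_cast
      ring
    have hH : ∑ i ∈ Finset.range (L+1+1), v (L+1) i * Real.log (v (L+1) i)
        = (1-p) * (∑ i ∈ Finset.range (L+1), v L i * Real.log (v L i))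
          + (1-p) * Real.log (1-p) + p * Real.log p := by
      rw [Finset.sum_range_succ, etop]
      have h2 : ∑ i ∈ Finset.range (L+1), v (L+1) i * Real.log (v (L+1) i)
          = ∑ i ∈ Finset.range (L+1),
              (((1-p) * Real.log (1-p)) * v L i + (1-p) * (v L i * Real.log (v L i))) := by
        refine Finset.sum_congr rfl fun i hi => ?_
        have hiL : i ≤ L := by simpa [Nat.lt_succ_iff] using hi
        rw [hrec L i, if_neg (by omega),
          Real.log_mul (ne_of_gt hp0) (ne_of_gt (hpos L i hiL))]
        ring
      rw [h2, Finset.sum_add_distrib, ← Finset.mul_sum, ← Finset.mul_sum, hsum L]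
      ring
    rw [hΘ, hH]
    set T := ∑ i ∈ Finset.Icc 1 L, (i:ℝ) * v L i * Real.log (v L i / v L (i-1)) with hT
    set S := ∑ i ∈ Finset.range (L+1), v L i * Real.log (v L i) with hS
    set A := Real.log (1-p) with hA
    set B := Real.log (1-q) with hB
    set C := Real.log p with hC
    set D := Real.log q with hD'
    have hD : D < 0 := Real.log_neg hq0 hq1.2
    have key1 : p * (D - C) ≤ q - p := by
      have h := Real.log_le_sub_one_of_pos (show (0:ℝ) < q / p from div_pos hq0 hp1.1)
      rw [Real.log_div (ne_of_gt hq0) (ne_of_gt hp1.1)] at h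
      have := mul_le_mul_of_nonneg_left h (le_of_lt hp1.1)
      calc p * (D - C) ≤ p * (q / p - 1) := this
        _ = q - p := by rw [mul_sub, mul_div_cancel₀ _ (ne_of_gt hp1.1)]; ring
    have key2 : (1-p) * (B - A) ≤ p - q := by
      have h := Real.log_le_sub_one_of_pos (show (0:ℝ) < (1-q) / (1-p) from
        div_pos (by linarith [hq1.2]) hp0)
      rw [Real.log_div (by linarith [hq1.2] : (1:ℝ)-q ≠ 0) (ne_of_gt hp0)] at h
      have := mul_le_mul_of_nonneg_left h (le_of_lt hp0)
      calc (1-p) * (B - A) ≤ (1-p) * ((1-q) / (1-p) - 1) := this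
        _ = p - q := by rw [mul_sub, mul_div_cancel₀ _ (ne_of_gt hp0)]; ring
    have hbr : (1-p)*(B-A) + p*(D-C) ≤ 0 := by linarith
    have hmul : (L:ℝ) * ((1-p)*(B-A) + p*(D-C)) ≤ 0 :=
      mul_nonpos_of_nonneg_of_nonpos (Nat.cast_nonneg L) hbr
    have hpD : p * D ≤ 0 := le_of_lt (mul_neg_of_pos_of_neg hp1.1 hD)
    have hih : (1-p) * (-T - -S) ≤ (1-p) * ((L:ℝ) * B) :=
      mul_le_mul_of_nonneg_left ih (le_of_lt hp0)
    rw [Nat.cast_succ]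
    nlinarith [hmul, hpD, hih]
end
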